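/- arXiv:0910.1899 — 3 statements merged into one kernel-verified Lean document; each statement's English description precedes it below -/
import Mathlib

section
/- Let n ≥ 2 and let F = FreeGroup (Fin n). Suppose u, v ∈ F and there exist a natural number m with 1 ≤ m ≤ n, a map b : Fin m → F with FreeGroup.lift b : FreeGroup (Fin m) →* F injective, an element w : FreeGroup (Fin m) with (FreeGroup.lift b) w = v, and a group automorphism h : FreeGroup (Fin n) ≃* FreeGroup (Fin n) with h u = ι_m w. Then there exists an injective group homomorphism f : F →* F with f u = v. -/
/-!
Composing with `h`, it suffices to extend the free basis `b` of `H = ⟨b 0, …, b (m-1)⟩` to a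
free family of `n` elements, and this is done one element at a time. If `m < n`, a rank count
gives a homomorphism `φ : F → ℤ` that kills `H` and is positive on some generator `s`. The values
of `φ` on the prefixes of reduced words of elements of `H` are bounded above by some `J`, because
such a bound survives both concatenation of words with `φ = 0` and free reduction. Hence no
element of `H` has a normal form beginning with `s^M`, `M = J + 1`. For a generator `y ≠ s`, the
element `c = s^M y s^{-M}` then plays ping-pong with `H` on the set of normal forms beginning with
`s^M y^{±1}` and its complement, so `b` extended by `c` is again a free basis.
-/

open scoped Function Pointwise

namespace List

variable {β : Type*}

theorem eq_of_replicate_append_cons_eq {x u u' : β} (hu : u ≠ x) (hu' : u' ≠ x)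
    {i j : ℕ} {R R' : List β} (h : replicate i x ++ u :: R = replicate j x ++ u' :: R') :
    i = j := by
  induction i generalizing j with
  | zero => cases j <;> simp_all [replicate_succ]
  | succ i ih => cases j <;> simp_all [replicate_succ]

theorem eq_of_append_eq_replicate_append_cons {x u u' : β} {M : ℕ} {A C B R R' : List β}
    (hu : u ≠ x) (hu' : u' ≠ x) (hA : ¬ replicate M x <+: A) (hC : ¬ replicate M x <+: C)
    (h₁ : A ++ B = replicate M x ++ u :: R) (h₂ : C ++ B = replicate M x ++ u' :: R') :
    A = C := by
  have key : ∀ {A u R}, ¬ replicate M x <+: A → A ++ B = replicate M x ++ u :: R →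
      ∃ a < M, A = replicate a x ∧ B = replicate (M - a) x ++ u :: R := by
    intro A u R hA h
    have hlt : A.length < M := by
      by_contra! hle
      refine hA (prefix_iff_eq_take.2 ?_)
      rw [length_replicate, ← take_append_of_le_length hle, h, take_left' (by simp)]
    refine ⟨A.length, hlt, ?_, ?_⟩
    · have := congrArg (take A.length) h
      rwa [take_left, take_append_of_le_length (by simp; omega), take_replicate,
        min_eq_left hlt.le] at this
    · have := congrArg (drop A.length) h
      rwa [drop_left, drop_append_of_le_length (by simp; omega), drop_replicate] at this
  obtain ⟨a, ha, rfl, hB₁⟩ := key hA h₁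
  obtain ⟨c, hc, rfl, hB₂⟩ := key hC h₂
  have := eq_of_replicate_append_cons_eq hu hu' (hB₁.symm.trans hB₂)
  rw [show a = c by omega]

end List

namespace FreeGroup

theorem injective_lift_sigma_of_ping_pong {ι : Type*} [Nontrivial ι]
    {X : ι → Type*} {G : Type*} [Group G] (g : (Σ i, X i) → G) (hX : ∃ i, Nonempty (X i))
    {Ω : Type*} [MulAction G Ω] (Y : ι → Set Ω) (hY : ∀ i, (Y i).Nonempty)
    (hYdisj : Pairwise (Disjoint on Y))
    (hpp : Pairwise fun i j => ∀ x : FreeGroup (X i), x ≠ 1 →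
      lift (fun a => g ⟨i, a⟩) x • Y j ⊆ Y i) :
    Function.Injective (lift g) := by
  set f : ∀ i, FreeGroup (X i) →* G := fun i => lift fun a => g ⟨i, a⟩
  set ψ : FreeGroup (Σ i, X i) →* Monoid.CoprodI fun i => FreeGroup (X i) :=
    lift fun p => Monoid.CoprodI.of (of p.2)
  have hψ : Function.LeftInverse (Monoid.CoprodI.lift fun i => map (Sigma.mk i)) ψ := by
    intro x
    change ((Monoid.CoprodI.lift fun i => map (Sigma.mk i)).comp ψ) x = MonoidHom.id _ x
    congr 1
    ext p
    simp [ψ]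
  have hlift : lift g = (Monoid.CoprodI.lift f).comp ψ := by
    ext p
    simp [ψ, f]
  obtain ⟨i, hi⟩ := hX
  have hcard : 3 ≤ Cardinal.mk (FreeGroup (X i)) :=
    (Cardinal.natCast_lt_aleph0 (n := 3)).le.trans (Cardinal.aleph0_le_mk _)
  rw [hlift, MonoidHom.coe_comp]
  exact (Monoid.CoprodI.lift_injective_of_ping_pong f (Or.inr ⟨i, hcard⟩) Y hY hYdisj hpp).comp
    hψ.injective

theorem injective_lift_snoc_of_ping_pong {G : Type*} [Group G] {Ω : Type*} [MulAction G Ω]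
    {m : ℕ} (b : Fin m → G) (c : G) (X Y : Set Ω) (hX : X.Nonempty) (hY : Y.Nonempty)
    (hXY : Disjoint X Y) (hb : ∀ x, x ≠ 1 → lift b x • Y ⊆ X)
    (hc : ∀ k : ℤ, k ≠ 0 → c ^ k • X ⊆ Y) :
    Function.Injective (lift (Fin.snoc b c : Fin (m + 1) → G)) := by
  set F : Fin (m + 1) → G := Fin.snoc b c
  let e : (Σ i : Bool, bif i then Unit else Fin m) ≃ Fin (m + 1) :=
    (Equiv.sumEquivSigmaBool (Fin m) Unit).symm.trans
      ((Equiv.optionEquivSumPUnit (Fin m)).symm.trans finSuccEquivLast.symm)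
  have hF_false : (fun a => (F ∘ e) ⟨false, a⟩) = b := by
    funext a
    change Fin.snoc (α := fun _ => G) b c (finSuccEquivLast.symm (some a)) = b a
    simp
  have hF_true : (fun a => (F ∘ e) ⟨true, a⟩) = fun _ => c := by
    funext a
    change Fin.snoc (α := fun _ => G) b c (finSuccEquivLast.symm none) = c
    simp
  have hFe : Function.Injective (lift (F ∘ e)) := by
    refine injective_lift_sigma_of_ping_pong (F ∘ e) ⟨true, ⟨()⟩⟩ (fun i => bif i then Y else X)
      (by rintro (_ | _) <;> assumption) ?_ ?_
    · rintro (_ | _) (_ | _) hij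
      all_goals first | exact absurd rfl hij | skip
      · exact hXY
      · exact hXY.symm
    · rintro (_ | _) (_ | _) hij x hx
      all_goals first | exact absurd rfl hij | skip
      · rw [hF_false]
        exact hb x hx
      · rw [hF_true]
        obtain ⟨k, rfl⟩ : ∃ k : ℤ, of () ^ k = x :=
          ⟨freeGroupUnitEquivInt x, freeGroupUnitEquivInt.symm_apply_apply x⟩
        rw [map_zpow, lift_apply_of]
        exact hc k (by rintro rfl; simp at hx)
  have hcomp : (lift F).comp (map e) = lift (F ∘ e) := by
    ext
    simp
  refine Function.Injective.of_comp_right (g := map e) ?_ (map_surjective e.surjective)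
  rwa [← MonoidHom.coe_comp, hcomp]

open List

variable {α : Type*}

theorem exists_hom_int_eq_one_of_lt_card [Fintype α] {m : ℕ}
    (b : Fin m → FreeGroup α) (hm : m < Fintype.card α) :
    ∃ (φ : FreeGroup α →* Multiplicative ℤ) (s : α), (∀ i, φ (b i) = 1) ∧
      0 < (φ (of s)).toAdd := by
  let L : (α → ℤ) →+ (Fin m → ℤ) := AddMonoidHom.mk'
    (fun c i => (lift (fun a => Multiplicative.ofAdd (c a)) (b i)).toAdd) fun c c' => by
      have : lift (fun a => Multiplicative.ofAdd (c a + c' a)) =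
          lift (fun a => Multiplicative.ofAdd (c a)) * lift fun a => Multiplicative.ofAdd (c' a) := by
        ext a
        simp [ofAdd_add]
      ext i
      simp only [Pi.add_apply, this]
      rfl
  have hL : ¬ Function.Injective L.toIntLinearMap := fun h => by
    have := LinearMap.finrank_le_finrank_of_injective h
    rw [Module.finrank_fintype_fun_eq_card, Module.finrank_fin_fun] at this
    omega
  obtain ⟨c, hc, hc0⟩ : ∃ c, L c = 0 ∧ c ≠ 0 := by
    simpa [injective_iff_map_eq_zero] using hL
  obtain ⟨s, hs⟩ := Function.ne_iff.1 hc0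
  refine ⟨lift fun a => Multiplicative.ofAdd (c s) ^ c a, s, fun i => ?_, ?_⟩
  · simpa [L, hc] using congrFun (L.toIntLinearMap.map_smul (c s) c) i
  · simpa [mul_self_pos] using hs

theorem Red.Step.exists_mk_take_eq {L₁ L₂ : List (α × Bool)} (h : Red.Step L₁ L₂) (t : ℕ) :
    ∃ t', mk (L₂.take t) = mk (L₁.take t') := by
  obtain @⟨A, B, x, b⟩ := h
  rcases le_or_gt t A.length with ht | ht
  · exact ⟨t, by simp [take_append, Nat.sub_eq_zero_of_le ht]⟩
  · refine ⟨t + 2, ?_⟩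
    obtain ⟨u, rfl⟩ := Nat.exists_eq_add_of_lt ht
    rw [take_append, take_append, show A.length + u + 1 + 2 - A.length = (u + 1) + 2 by omega,
      take_of_length_le (l := A) (by omega), take_of_length_le (l := A) (by omega)]
    simp only [take_succ_cons, show A.length + u + 1 - A.length = u + 1 by omega]
    exact (Quot.sound Red.Step.not).symm

theorem Red.exists_mk_take_eq {L₁ L₂ : List (α × Bool)} (h : Red L₁ L₂) (t : ℕ) :
    ∃ t', mk (L₂.take t) = mk (L₁.take t') := by
  induction h generalizing t with
  | refl => exact ⟨t, rfl⟩
  | tail _ hstep ih =>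
    obtain ⟨t', ht'⟩ := hstep.exists_mk_take_eq t
    obtain ⟨t'', ht''⟩ := ih t'
    exact ⟨t'', ht'.trans ht''⟩

variable [DecidableEq α]

theorem toWord_of_zpow (a : α) (k : ℤ) :
    (of a ^ k).toWord = replicate k.natAbs (a, decide (0 ≤ k)) := by
  rcases k with k | k
  · simp [toWord_of_pow]
  · simp [toWord_inv, toWord_of_pow, invRev]

theorem exists_reduce_append_eq {L₁ L₂ : List (α × Bool)} (h₁ : IsReduced L₁)
    (h₂ : IsReduced L₂) : ∃ A K B, L₁ = A ++ K ∧ L₂ = invRev K ++ B ∧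
      reduce (L₁ ++ L₂) = A ++ B := by
  induction L₁ with
  | nil => exact ⟨[], [], L₂, rfl, rfl, h₂.reduce_eq⟩
  | cons a L ih =>
    obtain ⟨A, K, B, rfl, rfl, hred⟩ := ih (h₁.infix (suffix_cons a L).isInfix)
    rw [cons_append, reduce.cons, hred]
    rcases A with _ | ⟨c, A⟩
    · rcases B with _ | ⟨c, B⟩
      · exact ⟨[a], K, [], by simp, by simp, rfl⟩
      · by_cases hc : a.1 = c.1 ∧ a.2 = !c.2
        · refine ⟨[], a :: K, B, rfl, ?_, by simp [hc]⟩
          obtain ⟨a1, a2⟩ := a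
          obtain ⟨c1, c2⟩ := c
          obtain ⟨rfl, rfl⟩ : a1 = c1 ∧ a2 = !c2 := hc
          simp [invRev]
        · exact ⟨[a], K, c :: B, rfl, rfl, by simp [hc]⟩
    · have hc : ¬ (a.1 = c.1 ∧ a.2 = !c.2) := by
        rintro ⟨h1, h2⟩
        have := (isReduced_cons_cons.1 (by simpa using h₁)).1 h1
        cases c.2 <;> simp_all
      exact ⟨a :: c :: A, K, B, by simp, rfl, by simp [hc]⟩

theorem exists_toWord_mul (x y : FreeGroup α) : ∃ A K B, x.toWord = A ++ K ∧
    y.toWord = invRev K ++ B ∧ (x * y).toWord = A ++ B := by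
  rw [toWord_mul]
  exact exists_reduce_append_eq isReduced_toWord isReduced_toWord

theorem toWord_mul_of_fst_ne {x y : FreeGroup α}
    (h : ∀ a ∈ x.toWord.getLast?, ∀ b ∈ y.toWord.head?, a.1 ≠ b.1) :
    (x * y).toWord = x.toWord ++ y.toWord := by
  rw [toWord_mul]
  exact IsReduced.reduce_eq <| isChain_append.2
    ⟨isReduced_toWord, isReduced_toWord, fun a ha b hb hab => absurd hab (h a ha b hb)⟩

section PingPongSet

def startsWithPowLetter (s : α) (M : ℕ) (y : α) : Set (FreeGroup α) :=
  {g | ∃ e R, g.toWord = replicate M (s, true) ++ (y, e) :: R}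

variable {s y : α} {M : ℕ}

theorem conj_zpow_mul_mem_startsWithPowLetter (hsy : s ≠ y) {g : FreeGroup α}
    (hg : g ∉ startsWithPowLetter s M y) {k : ℤ} (hk : k ≠ 0) :
    (of s ^ M * of y * (of s ^ M)⁻¹) ^ k * g ∈ startsWithPowLetter s M y := by
  set g' := (of s ^ M)⁻¹ * g
  have hhead : ∀ a ∈ g'.toWord.head?, a.1 ≠ y := by
    rintro ⟨a, e⟩ ha rfl
    obtain ⟨R, hR⟩ : ∃ R, g'.toWord = (a, e) :: R := by
      cases h : g'.toWord <;> simp_all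
    refine hg ⟨e, R, ?_⟩
    rw [show g = of s ^ M * g' by simp [g'], toWord_mul_of_fst_ne, toWord_of_pow, hR]
    simp_all [toWord_of_pow, getLast?_replicate]
  have hyk : (of y ^ k * g').toWord = replicate k.natAbs (y, decide (0 ≤ k)) ++ g'.toWord := by
    rw [toWord_mul_of_fst_ne, toWord_of_zpow]
    intro a ha b hb
    rw [toWord_of_zpow] at ha
    rw [eq_of_mem_replicate (mem_of_mem_getLast? ha)]
    exact (hhead b hb).symm
  obtain ⟨j, hj⟩ : ∃ j, k.natAbs = j + 1 := Nat.exists_eq_add_one.2 (Int.natAbs_pos.2 hk)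
  refine ⟨decide (0 ≤ k), replicate j (y, decide (0 ≤ k)) ++ g'.toWord, ?_⟩
  rw [conj_zpow, show of s ^ M * of y ^ k * (of s ^ M)⁻¹ * g = of s ^ M * (of y ^ k * g') by
    simp only [g', mul_assoc], toWord_mul_of_fst_ne, toWord_of_pow, hyk, hj, replicate_succ,
    cons_append]
  rw [toWord_of_pow, hyk, hj, replicate_succ]
  simp [getLast?_replicate, hsy]

theorem mul_notMem_startsWithPowLetter (hsy : s ≠ y) {H : Subgroup (FreeGroup α)}
    (hH : ∀ h ∈ H, ¬ replicate M (s, true) <+: h.toWord) {h : FreeGroup α} (hh : h ∈ H)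
    (h1 : h ≠ 1) {g : FreeGroup α} (hg : g ∈ startsWithPowLetter s M y) :
    h * g ∉ startsWithPowLetter s M y := by
  rintro ⟨e', R', hhg⟩
  obtain ⟨e, R, hg⟩ := hg
  obtain ⟨A, K, B, hA, hK, hAB⟩ := exists_toWord_mul h g
  have hne : ∀ e : Bool, (y, e) ≠ (s, true) := fun e he => hsy (congrArg Prod.fst he).symm
  have hAK : A = invRev K := by
    refine eq_of_append_eq_replicate_append_cons (hne e') (hne e) ?_ ?_ (hAB ▸ hhg) (hK ▸ hg)
    · exact fun hp => hH h hh (hp.trans (hA ▸ prefix_append A K))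
    · refine fun hp => hH h⁻¹ (inv_mem hh) (hp.trans ?_)
      rw [toWord_inv, hA, invRev_append]
      exact prefix_append _ _
  apply h1
  rw [← toWord_eq_nil_iff, ← (isReduced_toWord (x := h)).reduce_eq, hA, hAK,
    reduce_invRev_left_cancel]

theorem injective_lift_snoc_conj {m : ℕ} {b : Fin m → FreeGroup α}
    (hb : Function.Injective (lift b)) (hsy : s ≠ y)
    (hM : ∀ h ∈ (lift b).range, ¬ replicate M (s, true) <+: h.toWord) :
    Function.Injective (lift (Fin.snoc b (of s ^ M * of y * (of s ^ M)⁻¹) :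
      Fin (m + 1) → FreeGroup α)) := by
  have hS : of s ^ M * of y ∈ startsWithPowLetter s M y := by
    refine ⟨true, [], ?_⟩
    rw [toWord_mul_of_fst_ne] <;> simp [toWord_of_pow, getLast?_replicate, hsy]
  refine injective_lift_snoc_of_ping_pong b _ (startsWithPowLetter s M y)ᶜ
    (startsWithPowLetter s M y) ⟨1, fun ⟨_, _, h⟩ => by simp at h⟩ ⟨_, hS⟩ disjoint_compl_left
    (fun x hx => ?_) (fun k hk => ?_)
  · rintro _ ⟨g, hg, rfl⟩
    exact mul_notMem_startsWithPowLetter hsy hM ⟨x, rfl⟩ ((map_ne_one_iff _ hb).2 hx) hg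
  · rintro _ ⟨g, hg, rfl⟩
    exact conj_zpow_mul_mem_startsWithPowLetter hsy hg hk

end PingPongSet

section Height

variable (φ : FreeGroup α →* Multiplicative ℤ)

def heightBoundedKer (J : ℕ) : Subgroup (FreeGroup α) where
  carrier := {g | φ g = 1 ∧ ∀ t, (φ (mk (g.toWord.take t))).toAdd ≤ J}
  one_mem' := ⟨φ.map_one, fun t => by simp [← one_eq_mk]⟩
  mul_mem' := by
    rintro g₁ g₂ ⟨hg₁, hb₁⟩ ⟨hg₂, hb₂⟩
    refine ⟨by simp [hg₁, hg₂], fun t => ?_⟩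
    obtain ⟨t', ht'⟩ := (reduce.red (L := g₁.toWord ++ g₂.toWord)).exists_mk_take_eq t
    rw [toWord_mul, ht', take_append, ← mul_mk, φ.map_mul, toAdd_mul]
    rcases le_or_gt t' g₁.toWord.length with ht | ht
    · simpa [Nat.sub_eq_zero_of_le ht, ← one_eq_mk] using hb₁ t'
    · simpa [take_of_length_le ht.le, mk_toWord, hg₁] using hb₂ (t' - g₁.toWord.length)
  inv_mem' := by
    rintro g ⟨hg, hb⟩
    refine ⟨by simp [hg], fun t => ?_⟩
    set k := g.toWord.length - t
    have hsplit : φ (mk (g.toWord.take k)) * φ (mk (g.toWord.drop k)) = 1 := by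
      rw [← φ.map_mul, mul_mk, take_append_drop, mk_toWord, hg]
    have htake : (invRev g.toWord).take t = invRev (g.toWord.drop k) := by
      simp [invRev, take_reverse, k]
    rw [toWord_inv, htake, ← inv_mk, φ.map_inv, eq_inv_of_mul_eq_one_right hsplit, inv_inv]
    exact hb k

theorem heightBoundedKer_mono : Monotone (heightBoundedKer φ) :=
  fun _ _ hJ _ hg => ⟨hg.1, fun t => (hg.2 t).trans (by exact_mod_cast hJ)⟩

theorem exists_mem_heightBoundedKer {g : FreeGroup α} (hg : φ g = 1) :
    ∃ J, g ∈ heightBoundedKer φ J := by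
  refine ⟨(Finset.range (g.toWord.length + 1)).sup fun t => (φ (mk (g.toWord.take t))).toAdd.toNat,
    hg, fun t => ?_⟩
  have hmin : g.toWord.take t = g.toWord.take (min t g.toWord.length) := by
    rcases le_total t g.toWord.length with h | h <;> simp [h, take_of_length_le]
  rw [hmin]
  refine (Int.self_le_toNat _).trans ?_
  exact_mod_cast Finset.le_sup (f := fun t => (φ (mk (g.toWord.take t))).toAdd.toNat)
    (Finset.mem_range_succ_iff.2 (min_le_right _ _))

theorem not_replicate_prefix_of_mem_heightBoundedKer {s : α} (hs : 0 < (φ (of s)).toAdd)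
    {J : ℕ} {g : FreeGroup α} (hg : g ∈ heightBoundedKer φ J) :
    ¬ replicate (J + 1) (s, true) <+: g.toWord := by
  intro hp
  have := hg.2 (J + 1)
  rw [← length_replicate (n := J + 1) (a := (s, true)), ← prefix_iff_eq_take.1 hp,
    ← toWord_of_pow, mk_toWord, map_pow, toAdd_pow] at this
  rw [nsmul_eq_mul] at this
  push_cast at this
  nlinarith

end Height

theorem exists_injective_lift_snoc [Fintype α] [Nontrivial α] {m : ℕ} {b : Fin m → FreeGroup α}
    (hb : Function.Injective (lift b)) (hm : m < Fintype.card α) :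
    ∃ c, Function.Injective (lift (Fin.snoc b c : Fin (m + 1) → FreeGroup α)) := by
  obtain ⟨φ, s, hφb, hs⟩ := exists_hom_int_eq_one_of_lt_card b hm
  obtain ⟨y, hy⟩ := exists_ne s
  obtain ⟨J, hJ⟩ : ∃ J, ∀ i, b i ∈ heightBoundedKer φ J := by
    choose J hJ using fun i => exists_mem_heightBoundedKer φ (hφb i)
    exact ⟨Finset.univ.sup J,
      fun i => heightBoundedKer_mono φ (Finset.le_sup (Finset.mem_univ i)) (hJ i)⟩
  have hH : (lift b).range ≤ heightBoundedKer φ J := range_lift_le (by rintro _ ⟨i, rfl⟩; exact hJ i)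
  exact ⟨_, injective_lift_snoc_conj hb hy.symm fun h hh =>
    not_replicate_prefix_of_mem_heightBoundedKer φ hs (hH hh)⟩

theorem exists_injective_lift_extend [Fintype α] [Nontrivial α] {m : ℕ} {b : Fin m → FreeGroup α}
    (hb : Function.Injective (lift b)) {k : ℕ} (hmk : m ≤ k) (hk : k ≤ Fintype.card α) :
    ∃ b' : Fin k → FreeGroup α, Function.Injective (lift b') ∧
      ∀ i, b' (Fin.castLE hmk i) = b i := by
  induction k, hmk using Nat.le_induction with
  | base => exact ⟨b, hb, fun i => by simp⟩
  | succ k hmk ih =>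
    obtain ⟨b', hb', hb'b⟩ := ih (by omega)
    obtain ⟨c, hc⟩ := exists_injective_lift_snoc hb' (by omega)
    refine ⟨Fin.snoc b' c, hc, fun i => ?_⟩
    rw [← hb'b i]
    exact Fin.snoc_castSucc (α := fun _ => FreeGroup α) c b' (Fin.castLE hmk i)

end FreeGroup

theorem monomorphism_criterion_converse_general (n : ℕ) (hn : 2 ≤ n)
    (u v : FreeGroup (Fin n))
    (m : ℕ) (hmn : m ≤ n)
    (b : Fin m → FreeGroup (Fin n))
    (hb : Function.Injective (FreeGroup.lift b))
    (w : FreeGroup (Fin m))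
    (hw : FreeGroup.lift b w = v)
    (h : FreeGroup (Fin n) ≃* FreeGroup (Fin n))
    (hh : h u = FreeGroup.map (Fin.castLE hmn) w) :
    ∃ f : FreeGroup (Fin n) →* FreeGroup (Fin n),
      Function.Injective f ∧ f u = v := by
  have : Nontrivial (Fin n) := Fin.nontrivial_iff_two_le.2 hn
  obtain ⟨b', hb', hb'b⟩ := FreeGroup.exists_injective_lift_extend hb hmn (by simp)
  have hext : (FreeGroup.lift b').comp (FreeGroup.map (Fin.castLE hmn)) = FreeGroup.lift b := by
    ext i
    simp [hb'b]
  refine ⟨(FreeGroup.lift b').comp h.toMonoidHom, hb'.comp h.injective, ?_⟩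
  rw [MonoidHom.comp_apply, MulEquiv.coe_toMonoidHom, hh, ← MonoidHom.comp_apply, hext, hw]

/-- Converse direction (2) ⇒ (1) of Proposition 3.2 of Ciobanu–Ould Houcine. -/
theorem monomorphism_criterion_converse (n : ℕ) (hn : 2 ≤ n)
    (u v : FreeGroup (Fin n))
    (m : ℕ) (hm1 : 1 ≤ m) (hmn : m ≤ n)
    (b : Fin m → FreeGroup (Fin n))
    (hb : Function.Injective (FreeGroup.lift b))
    (w : FreeGroup (Fin m))
    (hw : FreeGroup.lift b w = v)
    (h : FreeGroup (Fin n) ≃* FreeGroup (Fin n))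
    (hh : h u = FreeGroup.map (Fin.castLE hmn) w) :
    ∃ f : FreeGroup (Fin n) →* FreeGroup (Fin n),
      Function.Injective f ∧ f u = v :=
  monomorphism_criterion_converse_general n hn u v m hmn b hb w hw h hh
end

section
/- Let n ≥ 2, let F = FreeGroup (Fin n), and let H be a subgroup of F generated by m < n elements, i.e., H = Subgroup.closure (Set.range a) for some a : Fin m → F with m < n. Then H is contained in a subgroup of F of infinite rank: there exists a subgroup K of F with H ≤ K and K not finitely generated. -/
/-!
Abelianizing, a homomorphism `φ : F → ℤ` is a vector `c ∈ ℤⁿ`, and `φ` kills the `m < n`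
generators of `H` as soon as `c` lies in the kernel of an `m × n` integer matrix; so some
nonzero `φ` has `H ≤ ker φ`. This kernel is not finitely generated: send `F` to the wreath
product `ℤ ≀ ℤ` by `x_l ↦ (δ_{l = j}, c_l)`, where `c_i ≠ 0` and `j ≠ i`. The kernel lands in the
base, so a finite generating set would confine the supports of all its images to one finite
set, while the image of `⁅x_i ^ k, x_j⁆ ∈ ker φ` is nontrivial at the point `k c_i`.
-/

open Function Multiplicative
open scoped commutatorElement

namespace RegularWreathProduct

variable {D Q : Type*} [Group D] [Group Q]

def restricted : Subgroup (D ≀ᵣ Q) where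
  carrier := {g | (mulSupport g.left).Finite}
  one_mem' := by simp
  mul_mem' {g h} hg hh :=
    (hg.union (hh.preimage (mul_right_injective g.right⁻¹).injOn)).subset (mulSupport_mul _ _)
  inv_mem' {g} hg := (hg.preimage (mul_right_injective g.right).injOn).subset fun x hx => by
    simpa using hx

def baseSupportedIn (T : Set Q) : Subgroup (D ≀ᵣ Q) where
  carrier := {g | g.right = 1 ∧ mulSupport g.left ⊆ T}
  one_mem' := by simp
  mul_mem' {g h} hg hh := by
    refine ⟨by simp [hg.1, hh.1], ?_⟩
    have : (g * h).left = g.left * h.left := by simp [hg.1]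
    exact this ▸ (mulSupport_mul _ _).trans (Set.union_subset hg.2 hh.2)
  inv_mem' {g} hg := ⟨by simp [hg.1], fun x hx => hg.2 (by simpa [hg.1] using hx)⟩

theorem exists_finite_forall_mulSupport_subset_of_fg {G : Type*} [Group G] {θ : G →* D ≀ᵣ Q}
    (hθ : θ.range ≤ restricted) {K : Subgroup G} (hK : K.FG)
    (hK_base : K ≤ (rightHom.comp θ).ker) :
    ∃ T : Set Q, T.Finite ∧ ∀ g ∈ K, mulSupport (θ g).left ⊆ T := by
  obtain ⟨S, rfl⟩ := hK
  refine ⟨⋃ s ∈ S, mulSupport (θ s).left, S.finite_toSet.biUnion fun s _ => hθ ⟨s, rfl⟩,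
    fun g hg => ?_⟩
  have hS : Subgroup.closure (S : Set G) ≤ (baseSupportedIn _).comap θ :=
    (Subgroup.closure_le _).2 fun s hs =>
      ⟨hK_base (Subgroup.subset_closure hs),
        Set.subset_biUnion_of_mem (u := fun s => mulSupport (θ s).left) hs⟩
  exact (hS hg).2

theorem commutatorElement_inl_left {Q : Type*} [CommGroup Q] (q q' : Q) (f : Q → D) (x : Q) :
    ⁅(inl q : D ≀ᵣ Q), mk f q'⁆.left x = f (q⁻¹ * x) * (f x)⁻¹ := by
  simp [commutatorElement_def]

end RegularWreathProduct

namespace FreeGroup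

open RegularWreathProduct

variable {α : Type*}

theorem lift_ofAdd_add (c d : α → ℤ) :
    lift (ofAdd ∘ (c + d)) = lift (ofAdd ∘ c) * lift (ofAdd ∘ d) :=
  ext_hom _ _ fun i => by simp [ofAdd_add]

theorem exists_ne_zero_forall_lift_eq_one [Fintype α] {m : ℕ} (hm : m < Fintype.card α)
    (a : Fin m → FreeGroup α) : ∃ c : α → ℤ, c ≠ 0 ∧ ∀ i, lift (ofAdd ∘ c) (a i) = 1 := by
  let L : (α → ℤ) →+ (Fin m → ℤ) :=
    AddMonoidHom.mk' (fun c i => toAdd (lift (ofAdd ∘ c) (a i))) fun c d => by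
      ext i; simp [lift_ofAdd_add, toAdd_mul]
  have hL : ¬ Injective L.toIntLinearMap := fun h => by
    have := LinearMap.finrank_le_finrank_of_injective h
    simp only [Module.finrank_fintype_fun_eq_card, Fintype.card_fin] at this
    omega
  obtain ⟨c, hc, hc0⟩ : ∃ c, L c = 0 ∧ c ≠ 0 := by
    simpa [injective_iff_map_eq_zero] using hL
  exact ⟨c, hc0, fun i => congrFun hc i⟩

variable [DecidableEq α]

def toWreath (c : α → ℤ) (j : α) : FreeGroup α →* Multiplicative ℤ ≀ᵣ Multiplicative ℤ :=
  lift fun l => ⟨if l = j then Pi.mulSingle 1 (ofAdd 1) else 1, ofAdd (c l)⟩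

theorem rightHom_comp_toWreath (c : α → ℤ) (j : α) :
    rightHom.comp (toWreath c j) = lift (ofAdd ∘ c) :=
  ext_hom _ _ fun l => by simp [toWreath]

theorem range_toWreath_le_restricted (c : α → ℤ) (j : α) : (toWreath c j).range ≤ restricted := by
  refine range_lift_le ?_
  rintro _ ⟨l, rfl⟩
  show (mulSupport (if l = j then Pi.mulSingle 1 (ofAdd 1) else 1)).Finite
  split_ifs
  · exact (Set.finite_singleton 1).subset Pi.mulSupport_mulSingle_subset
  · simp

theorem toWreath_commutatorElement_left_apply {c : α → ℤ} {i j : α} (hij : i ≠ j) {k : ℤ}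
    (hk : k * c i ≠ 0) : (toWreath c j ⁅of i ^ k, of j⁆).left (ofAdd (k * c i)) = ofAdd 1 := by
  have hi : toWreath c j (of i) = inl (ofAdd (c i)) := by
    simp [toWreath, hij]; rfl
  have hj : toWreath c j (of j) = ⟨Pi.mulSingle 1 (ofAdd 1), ofAdd (c j)⟩ := by
    simp [toWreath]
  rw [map_commutatorElement, map_zpow, hi, ← map_zpow, ← ofAdd_zsmul, smul_eq_mul, hj,
    commutatorElement_inl_left, inv_mul_cancel, Pi.mulSingle_eq_same,
    Pi.mulSingle_eq_of_ne (ofAdd_eq_one.not.2 hk), inv_one, mul_one]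

theorem not_fg_ker_lift {c : α → ℤ} {i j : α} (hij : i ≠ j) (hc : c i ≠ 0) :
    ¬ (lift (ofAdd ∘ c)).ker.FG := by
  intro hK
  obtain ⟨T, hT, hT_supp⟩ := exists_finite_forall_mulSupport_subset_of_fg
    (range_toWreath_le_restricted c j) hK (by rw [rightHom_comp_toWreath])
  have hmem : ∀ k : ℤ, ofAdd (k * c i) ∈ insert 1 T := by
    intro k
    rcases eq_or_ne k 0 with rfl | hk
    · simp
    have hw : ⁅of i ^ k, of j⁆ ∈ (lift (ofAdd ∘ c)).ker := by
      simp [map_commutatorElement, commutatorElement_eq_one_iff_commute, Commute.all]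
    refine Set.mem_insert_of_mem _ (hT_supp _ hw ?_)
    rw [mem_mulSupport, toWreath_commutatorElement_left_apply hij (mul_ne_zero hk hc)]
    exact ofAdd_eq_one.not.2 one_ne_zero
  exact Set.infinite_of_injective_forall_mem (ofAdd.injective.comp (mul_left_injective₀ hc)) hmem
    (hT.insert 1)

end FreeGroup

/-- Claim proved in Lemma 2.4 of Ciobanu–Ould Houcine: a subgroup of the free
group of rank `n ≥ 2` generated by `m < n` elements is contained in a subgroup
of infinite rank (i.e. one that is not finitely generated). -/
theorem subgroup_contained_in_infinite_rank (n : ℕ) (hn : 2 ≤ n)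
    (m : ℕ) (hm : m < n)
    (a : Fin m → FreeGroup (Fin n))
    (H : Subgroup (FreeGroup (Fin n)))
    (hH : H = Subgroup.closure (Set.range a)) :
    ∃ K : Subgroup (FreeGroup (Fin n)), H ≤ K ∧ ¬ K.FG := by
  obtain ⟨c, hc, hca⟩ := FreeGroup.exists_ne_zero_forall_lift_eq_one (by simpa using hm) a
  obtain ⟨i, hi⟩ := ne_iff.mp hc
  have : Nontrivial (Fin n) := Fin.nontrivial_iff_two_le.mpr hn
  obtain ⟨j, hij⟩ := exists_ne i
  refine ⟨_, ?_, FreeGroup.not_fg_ker_lift hij.symm hi⟩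
  rw [hH, Subgroup.closure_le]
  rintro _ ⟨l, rfl⟩
  exact hca l
end

section
/- Let V be a nonempty finite type with a distinguished element ⋆ : V, let d : V → ℕ satisfy d v ≥ 3 for every v ≠ ⋆ and d ⋆ ≥ 1, and let E, g : ℕ satisfy the handshake identity ∑_{v : V} d v = 2 * E and the Euler characteristic identity E + 1 = g + Fintype.card V. Then Fintype.card V ≤ 2 * g and E + 1 ≤ 3 * g (i.e., E ≤ 3g − 1). -/
open Finset

theorem add_card_sub_one_nsmul_le_sum {ι M : Type*} [Fintype ι] [AddCommMonoid M]
    [PartialOrder M] [IsOrderedAddMonoid M] (f : ι → M) (a : ι) {c : M}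
    (hc : ∀ i, i ≠ a → c ≤ f i) :
    f a + (Fintype.card ι - 1) • c ≤ ∑ i, f i := by
  classical
  rw [← add_sum_erase univ f (mem_univ a), ← card_univ, ← card_erase_of_mem (mem_univ a)]
  gcongr
  exact card_nsmul_le_sum _ _ _ fun i hi => hc i (ne_of_mem_erase hi)

theorem topological_graph_count_general (V : Type*) [Fintype V]
    (star : V) (d : V → ℕ)
    (hd3 : ∀ v : V, v ≠ star → 3 ≤ d v) (hdstar : 1 ≤ d star)
    (E g : ℕ)
    (handshake : ∑ v : V, d v = 2 * E)
    (euler : E + 1 = g + Fintype.card V) :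
    Fintype.card V ≤ 2 * g ∧ E + 1 ≤ 3 * g := by
  have hdegree : d star + (Fintype.card V - 1) * 3 ≤ 2 * E := by
    simpa [handshake] using add_card_sub_one_nsmul_le_sum d star hd3
  have hV : 0 < Fintype.card V := Fintype.card_pos_iff.2 ⟨star⟩
  -- `3|V| - 2 ≤ 2E = 2g + 2|V| - 2` gives `|V| ≤ 2g`, and then `E + 1 = g + |V| ≤ 3g`.
  constructor <;> omega

/-- The counting core of Lemma 2.2 of Ciobanu–Ould Houcine: if a finite graph
with vertex set `V`, distinguished vertex `⋆`, degree function `d` (with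
`d v ≥ 3` off `⋆` and `d ⋆ ≥ 1`), `E` edges and rank `g` satisfies the
handshake identity `∑ d v = 2E` and the Euler characteristic identity
`E - |V| + 1 = g`, then `|V| ≤ 2g` and `E ≤ 3g - 1`. -/
theorem topological_graph_count (V : Type*) [Fintype V] [Nonempty V]
    (star : V) (d : V → ℕ)
    (hd3 : ∀ v : V, v ≠ star → 3 ≤ d v) (hdstar : 1 ≤ d star)
    (E g : ℕ)
    (handshake : ∑ v : V, d v = 2 * E)
    (euler : E + 1 = g + Fintype.card V) :
    Fintype.card V ≤ 2 * g ∧ E + 1 ≤ 3 * g :=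
  topological_graph_count_general V star d hd3 hdstar E g handshake euler
end
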